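/- arXiv:2006.12401 — 2 statements merged into one kernel-verified Lean document; each statement's English description precedes it below -/
import Mathlib

section
/- For every λ ∈ ℂ with λ ≠ p(x) for all x ∈ [0,π] and λ ≠ p(0), the solution φ(x,λ) of the conformable fractional diffusion equation with φ(0,λ) = 1, D^α φ(0,λ) = h satisfies the integral equation φ(x,λ) = cos(λx^α/α − Q(x)) + (h/(λ − p(0))) sin(λx^α/α − Q(x)) + ∫₀ˣ [sin(λ(x^α − t^α)/α − Q(x) + Q(t)) / (λ − p(t))] · [(q(t) + p²(t)) φ(t,λ) + (D^α p(t)/(λ − p(t))) D^α φ(t,λ)] d_α t for all x ∈ [0,π]. -/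
open Set Filter Topology MeasureTheory intervalIntegral

noncomputable section

/-- Conformable fractional derivative (of order `α`) of a complex-valued function of a
real variable: `D^α f (x) = x^(1-α) f'(x)` (for `x > 0`). -/
def cfDeriv (α : ℝ) (f : ℝ → ℂ) (x : ℝ) : ℂ := ((x ^ (1 - α) : ℝ) : ℂ) * deriv f x

/-- Conformable fractional derivative of a real-valued function. -/
def cfDerivR (α : ℝ) (f : ℝ → ℝ) (x : ℝ) : ℝ := x ^ (1 - α) * deriv f x

/-- Fractional Wronskian `W_α[y,z](x) = y x * D^α z x - z x * D^α y x`. -/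
def cfWronskian (α : ℝ) (y z : ℝ → ℂ) (x : ℝ) : ℂ :=
  y x * cfDeriv α z x - z x * cfDeriv α y x

/-- `f` is absolutely continuous on `[a,b]`: it is the integral of some integrable
function. -/
def AbsContOn (f : ℝ → ℝ) (a b : ℝ) : Prop :=
  ∃ g : ℝ → ℝ, IntervalIntegrable g volume a b ∧
    ∀ x ∈ Set.Icc a b, f x = f a + ∫ t in a..x, g t

/-- Membership in the conformable Sobolev space `W²_α(0,π)`: absolutely continuous on
`[0,π]` with conformable fractional derivative in `L²((0,π), t^(α-1) dt)`. -/
def MemW2 (α : ℝ) (f : ℝ → ℝ) : Prop :=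
  AbsContOn f 0 Real.pi ∧
  IntervalIntegrable (fun t => t ^ (α - 1) * (cfDerivR α f t) ^ 2) volume 0 Real.pi

/-- `Q(x) = ∫₀ˣ p(t) d_α t = ∫₀ˣ t^(α-1) p(t) dt`. -/
def Qfun (α : ℝ) (p : ℝ → ℝ) (x : ℝ) : ℝ := ∫ t in (0:ℝ)..x, t ^ (α - 1) * p t

/-- `y` is a solution of the conformable fractional diffusion equation
`-D^α D^α y + (2 λ p + q) y = λ² y` on `(0,π)`, continuous on `[0,π]` and with `y` and
`D^α y` differentiable up to the right endpoint. -/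
def IsSolution (α : ℝ) (p q : ℝ → ℝ) (lam : ℂ) (y : ℝ → ℂ) : Prop :=
  ContinuousOn y (Set.Icc 0 Real.pi) ∧
  (∀ x ∈ Set.Ioc (0:ℝ) Real.pi, DifferentiableAt ℝ y x) ∧
  (∀ x ∈ Set.Ioc (0:ℝ) Real.pi, DifferentiableAt ℝ (cfDeriv α y) x) ∧
  (∀ x ∈ Set.Ioo (0:ℝ) Real.pi,
    -cfDeriv α (cfDeriv α y) x + (2 * lam * (p x : ℂ) + (q x : ℂ)) * y x = lam ^ 2 * y x)

/-- `y = φ(·,λ)`: the solution of the equation with `φ(0,λ) = 1` and `D^α φ(0,λ) = h`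
(the conformable derivative at `0` being understood as the limit from the right). -/
def IsPhi (α h : ℝ) (p q : ℝ → ℝ) (lam : ℂ) (y : ℝ → ℂ) : Prop :=
  IsSolution α p q lam y ∧ y 0 = 1 ∧
  Tendsto (cfDeriv α y) (nhdsWithin (0:ℝ) (Set.Ioi 0)) (nhds (h : ℂ))

/-- `y = ψ(·,λ)`: the solution of the equation with `ψ(π,λ) = 1`, `D^α ψ(π,λ) = -H`. -/
def IsPsi (α H : ℝ) (p q : ℝ → ℝ) (lam : ℂ) (y : ℝ → ℂ) : Prop :=
  IsSolution α p q lam y ∧ y Real.pi = 1 ∧ cfDeriv α y Real.pi = -(H : ℂ)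

/-!
Fix `x` and put `Θ(t) = λ(x^α - t^α)/α - Q(x) + Q(t)`. The function
`F(t) = sin Θ(t) · D^α φ(t) / (λ - p(t)) + cos Θ(t) · φ(t)` equals `φ(x)` at `t = x`, and at
`t = 0` (with `D^α φ` extended by its limit `h`) it is the free term of the integral equation.
Differentiating with the equation, the `λ²`-terms cancel because `(λ - p)² + 2λp - λ² = p²`, and
`F'` is the integrand, at every point where `p` is differentiable. Since `p` is absolutely
continuous and `λ - p` is bounded away from `0`, `F` is absolutely continuous on `[0, x]`, so the
fundamental theorem of calculus for absolutely continuous functions integrates this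
almost-everywhere identity.
-/

namespace AbsolutelyContinuousOnInterval

variable {X Y : Type*} [PseudoMetricSpace X] [PseudoMetricSpace Y] {a b : ℝ}

theorem of_dist_le {f : ℝ → X} {g : ℝ → Y} {K : ℝ} (hg : AbsolutelyContinuousOnInterval g a b)
    (hfg : ∀ s ∈ uIcc a b, ∀ t ∈ uIcc a b, dist (f s) (f t) ≤ K * dist (g s) (g t)) :
    AbsolutelyContinuousOnInterval f a b := by
  refine squeeze_zero' (.of_forall fun _ ↦ Finset.sum_nonneg fun _ _ ↦ dist_nonneg) ?_
    (by simpa using Tendsto.const_mul K hg)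
  rw [eventually_inf_principal]
  filter_upwards with E hE
  rw [Finset.mul_sum]
  exact Finset.sum_le_sum fun i hi ↦ hfg _ (hE.1 i hi).1 _ (hE.1 i hi).2

theorem congr {f g : ℝ → X} (hg : AbsolutelyContinuousOnInterval g a b)
    (hfg : EqOn f g (uIcc a b)) : AbsolutelyContinuousOnInterval f a b :=
  hg.of_dist_le (K := 1) fun s hs t ht ↦ by rw [hfg hs, hfg ht, one_mul]

theorem ofReal {𝕜 : Type*} [RCLike 𝕜] {f : ℝ → ℝ} (hf : AbsolutelyContinuousOnInterval f a b) :
    AbsolutelyContinuousOnInterval (fun t ↦ (f t : 𝕜)) a b :=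
  hf.of_dist_le (K := 1) fun s _ t _ ↦ by rw [dist_algebraMap', one_mul]

theorem inv {𝕜 : Type*} [NormedField 𝕜] {f : ℝ → 𝕜} (hf : AbsolutelyContinuousOnInterval f a b)
    (hf0 : ∀ t ∈ uIcc a b, f t ≠ 0) : AbsolutelyContinuousOnInterval (fun t ↦ (f t)⁻¹) a b := by
  obtain ⟨t₀, ht₀, hmin⟩ := isCompact_uIcc.exists_isMinOn nonempty_uIcc hf.continuousOn.norm
  have hδ : 0 < ‖f t₀‖ := norm_pos_iff.2 (hf0 t₀ ht₀)
  refine hf.of_dist_le (K := (‖f t₀‖ ^ 2)⁻¹) fun s hs t ht ↦ ?_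
  have hs' : ‖f t₀‖ ≤ ‖f s‖ := hmin hs
  have ht' : ‖f t₀‖ ≤ ‖f t‖ := hmin ht
  rw [dist_eq_norm, dist_eq_norm, inv_sub_inv (hf0 s hs) (hf0 t ht), norm_div, norm_mul,
    norm_sub_rev, div_eq_inv_mul, sq]
  gcongr

end AbsolutelyContinuousOnInterval

theorem IntervalIntegrable.absolutelyContinuousOnInterval_intervalIntegral_rclike
    {𝕜 : Type*} [RCLike 𝕜] {f : ℝ → 𝕜} {a b c : ℝ}
    (h : IntervalIntegrable f volume a b) (hc : c ∈ uIcc a b) :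
    AbsolutelyContinuousOnInterval (fun x ↦ ∫ t in c..x, f t) a b := by
  have hre : IntervalIntegrable (fun t ↦ RCLike.re (f t)) volume a b := ⟨h.1.re, h.2.re⟩
  have him : IntervalIntegrable (fun t ↦ RCLike.im (f t)) volume a b := ⟨h.1.im, h.2.im⟩
  refine ((hre.absolutelyContinuousOnInterval_intervalIntegral hc).ofReal (𝕜 := 𝕜)).add
    (((him.absolutelyContinuousOnInterval_intervalIntegral hc).ofReal (𝕜 := 𝕜)).const_smul
      (RCLike.I : 𝕜)) |>.congr fun x hx ↦ ?_
  have hcx : IntervalIntegrable f volume c x := h.mono_set (uIcc_subset_uIcc hc hx)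
  simp only [Pi.add_apply, smul_eq_mul, intervalIntegral_re hcx, intervalIntegral_im hcx]
  rw [mul_comm, RCLike.re_add_im]

namespace AbsolutelyContinuousOnInterval

variable {𝕜 : Type*} [RCLike 𝕜] {f f' : ℝ → 𝕜} {a b : ℝ}

theorem of_eq_add_intervalIntegral (hf' : IntervalIntegrable f' volume a b)
    (hf : ∀ x ∈ uIcc a b, f x = f a + ∫ t in a..x, f' t) :
    AbsolutelyContinuousOnInterval f a b :=
  (hf'.absolutelyContinuousOnInterval_intervalIntegral_rclike left_mem_uIcc).of_dist_le (K := 1)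
    fun s hs t ht ↦ by rw [hf s hs, hf t ht, dist_add_left, one_mul]

theorem integral_eq_sub_of_ae_hasDerivAt
    (hf : AbsolutelyContinuousOnInterval f a b) (hf' : IntervalIntegrable f' volume a b)
    (hderiv : ∀ᵐ t, t ∈ uIcc a b → HasDerivAt f (f' t) t) :
    ∫ t in a..b, f' t = f b - f a := by
  have hprim := hf'.absolutelyContinuousOnInterval_intervalIntegral_rclike left_mem_uIcc
  obtain ⟨C, hC⟩ := (hf.sub hprim).const_of_ae_hasDerivAt_zero (by
    filter_upwards [hderiv, hf'.ae_hasDerivAt_integral] with t hft hprimt ht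
    simpa using (hft ht).sub (hprimt ht a left_mem_uIcc))
  have ha := hC a left_mem_uIcc
  have hb := hC b right_mem_uIcc
  simp only [Pi.sub_apply, integral_same, sub_zero] at ha hb
  rw [ha, ← hb]
  abel

end AbsolutelyContinuousOnInterval

theorem absolutelyContinuousOnInterval_of_hasDerivAt {𝕜 : Type*} [RCLike 𝕜] {f f' : ℝ → 𝕜}
    {a b : ℝ} (hab : a ≤ b) (hf : ContinuousOn f (Icc a b))
    (hderiv : ∀ t ∈ Ioo a b, HasDerivAt f (f' t) t) (hf' : IntervalIntegrable f' volume a b) :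
    AbsolutelyContinuousOnInterval f a b := by
  refine .of_eq_add_intervalIntegral hf' fun x hx ↦ ?_
  rw [uIcc_of_le hab] at hx
  rw [integral_eq_sub_of_hasDerivAt_of_le hx.1 (hf.mono (Icc_subset_Icc_right hx.2))
    (fun t ht ↦ hderiv t ⟨ht.1, ht.2.trans_le hx.2⟩) (hf'.mono_set ?_), add_sub_cancel]
  rw [uIcc_of_le hx.1, uIcc_of_le hab]
  exact Icc_subset_Icc_right hx.2

theorem AbsContOn.absolutelyContinuousOnInterval {f : ℝ → ℝ} {a b : ℝ} (hab : a ≤ b)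
    (hf : AbsContOn f a b) : AbsolutelyContinuousOnInterval f a b := by
  obtain ⟨g, hg, hfg⟩ := hf
  exact .of_eq_add_intervalIntegral hg (by rwa [uIcc_of_le hab])

theorem hasDerivAt_sin_mul_inv_mul_add_cos_mul {θ y z : ℝ → ℂ} {p : ℝ → ℝ} {t p' : ℝ}
    {w lam c : ℂ} (hθ : HasDerivAt θ (w * -(lam - p t)) t) (hy : HasDerivAt y (w * z t) t)
    (hz : HasDerivAt z (w * ((2 * lam * p t + c - lam ^ 2) * y t)) t) (hp : HasDerivAt p p' t)
    (hB : lam - p t ≠ 0) :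
    HasDerivAt (fun s ↦ Complex.sin (θ s) * (lam - p s)⁻¹ * z s + Complex.cos (θ s) * y s)
      (w * (Complex.sin (θ t) * (lam - p t)⁻¹ * ((c + p t ^ 2) * y t))
        + p' * (Complex.sin (θ t) * ((lam - p t)⁻¹) ^ 2 * z t)) t := by
  have hsin := (Complex.hasDerivAt_sin (θ t)).comp t hθ
  have hcos := (Complex.hasDerivAt_cos (θ t)).comp t hθ
  have hu := (hp.ofReal_comp.const_sub lam).inv hB
  refine (((hsin.mul hu).mul hz).add (hcos.mul hy)).congr_deriv ?_
  simp only [Function.comp_apply, Pi.mul_apply, Pi.inv_apply]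
  field_simp
  ring

theorem Real.rpow_sub_one_mul_rpow_one_sub {t : ℝ} (ht : 0 < t) (α : ℝ) :
    t ^ (α - 1) * t ^ (1 - α) = 1 := by
  rw [← Real.rpow_add ht]
  norm_num

theorem intervalIntegrable_rpow_sub_one_mul {α b : ℝ} (hα : 0 < α) {m : ℝ → ℂ}
    (hm : ContinuousOn m (uIcc 0 b)) :
    IntervalIntegrable (fun t ↦ ((t ^ (α - 1) : ℝ) : ℂ) * m t) volume 0 b := by
  have h := intervalIntegrable_rpow' (a := 0) (b := b) (r := α - 1) (by linarith)
  exact (show IntervalIntegrable (fun t ↦ ((t ^ (α - 1) : ℝ) : ℂ)) volume 0 b from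
    ⟨h.1.ofReal, h.2.ofReal⟩).mul_continuousOn hm

theorem absolutelyContinuousOnInterval_of_hasDerivAt_rpow_mul {α b : ℝ} (hα : 0 < α)
    (hb : 0 ≤ b) {f m : ℝ → ℂ} (hf : ContinuousOn f (Icc 0 b)) (hm : ContinuousOn m (Icc 0 b))
    (hderiv : ∀ t ∈ Ioo 0 b, HasDerivAt f (((t ^ (α - 1) : ℝ) : ℂ) * m t) t) :
    AbsolutelyContinuousOnInterval f 0 b :=
  absolutelyContinuousOnInterval_of_hasDerivAt hb hf hderiv
    (intervalIntegrable_rpow_sub_one_mul hα (by rwa [uIcc_of_le hb]))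

theorem DifferentiableAt.hasDerivAt_rpow_mul_cfDeriv {α t : ℝ} {f : ℝ → ℂ}
    (hf : DifferentiableAt ℝ f t) (ht : 0 < t) :
    HasDerivAt f (((t ^ (α - 1) : ℝ) : ℂ) * cfDeriv α f t) t := by
  rw [cfDeriv, ← mul_assoc, ← Complex.ofReal_mul, Real.rpow_sub_one_mul_rpow_one_sub ht,
    Complex.ofReal_one, one_mul]
  exact hf.hasDerivAt

section Solution

variable {α h t : ℝ} {p q : ℝ → ℝ} {lam : ℂ} {y : ℝ → ℂ}

theorem IsSolution.hasDerivAt_cfDeriv (hy : IsSolution α p q lam y) (ht : t ∈ Ioo 0 Real.pi) :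
    HasDerivAt (cfDeriv α y)
      (((t ^ (α - 1) : ℝ) : ℂ) * ((2 * lam * p t + q t - lam ^ 2) * y t)) t := by
  have hd := (hy.2.2.1 t (Ioo_subset_Ioc_self ht)).hasDerivAt_rpow_mul_cfDeriv (α := α) ht.1
  rwa [show cfDeriv α (cfDeriv α y) t = (2 * lam * p t + q t - lam ^ 2) * y t by
    linear_combination -hy.2.2.2 t ht] at hd

theorem IsPhi.continuousOn_update_cfDeriv (hy : IsPhi α h p q lam y) :
    ContinuousOn (Function.update (cfDeriv α y) 0 (h : ℂ)) (Icc 0 Real.pi) := by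
  intro t ht
  rcases ht.1.eq_or_lt with rfl | ht0
  · rw [continuousWithinAt_update_same]
    exact hy.2.2.mono_left (nhdsWithin_mono _ fun s hs ↦ lt_of_le_of_ne hs.1.1 (Ne.symm hs.2))
  · refine ((hy.1.2.2.1 t ⟨ht0, ht.2⟩).continuousAt.congr ?_).continuousWithinAt
    filter_upwards [lt_mem_nhds ht0] with s hs
    exact (Function.update_of_ne hs.ne' _ _).symm

theorem IsPhi.hasDerivAt (hy : IsPhi α h p q lam y) (ht : t ∈ Ioo 0 Real.pi) :
    HasDerivAt y (((t ^ (α - 1) : ℝ) : ℂ) * Function.update (cfDeriv α y) 0 (h : ℂ) t) t := by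
  rw [Function.update_of_ne ht.1.ne']
  exact (hy.1.2.1 t (Ioo_subset_Ioc_self ht)).hasDerivAt_rpow_mul_cfDeriv ht.1

theorem IsPhi.hasDerivAt_update_cfDeriv (hy : IsPhi α h p q lam y) (ht : t ∈ Ioo 0 Real.pi) :
    HasDerivAt (Function.update (cfDeriv α y) 0 (h : ℂ))
      (((t ^ (α - 1) : ℝ) : ℂ) * ((2 * lam * p t + q t - lam ^ 2) * y t)) t := by
  refine (hy.1.hasDerivAt_cfDeriv ht).congr_of_eventuallyEq ?_
  filter_upwards [lt_mem_nhds ht.1] with s hs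
  exact Function.update_of_ne hs.ne' _ _

end Solution

theorem continuousOn_Qfun {α b : ℝ} (hα : 0 < α) (hb : 0 ≤ b) {p : ℝ → ℝ}
    (hp : ContinuousOn p (Icc 0 b)) : ContinuousOn (Qfun α p) (Icc 0 b) := by
  have h := continuousOn_primitive_interval' (a := 0)
    ((intervalIntegrable_rpow' (a := 0) (b := b) (r := α - 1) (by linarith)).mul_continuousOn
      (by rwa [uIcc_of_le hb])) left_mem_uIcc
  rwa [uIcc_of_le hb] at h

theorem hasDerivAt_Qfun {α b t : ℝ} (hα : 0 < α) {p : ℝ → ℝ} (hp : ContinuousOn p (Icc 0 b))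
    (ht : t ∈ Ioo 0 b) : HasDerivAt (Qfun α p) (t ^ (α - 1) * p t) t := by
  have hcont : ContinuousOn (fun s ↦ s ^ (α - 1) * p s) (Ioo 0 b) := fun s hs ↦
    ((Real.continuousAt_rpow_const s (α - 1) (Or.inl hs.1.ne')).continuousWithinAt).mul
      ((hp s (Ioo_subset_Icc_self hs)).mono Ioo_subset_Icc_self)
  exact integral_hasDerivAt_right
    ((intervalIntegrable_rpow' (by linarith)).mul_continuousOn
      (by rw [uIcc_of_le ht.1.le]; exact hp.mono (Icc_subset_Icc_right ht.2.le)))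
    (hcont.stronglyMeasurableAtFilter isOpen_Ioo t ht)
    (hcont.continuousAt (isOpen_Ioo.mem_nhds ht))

def phase (α : ℝ) (p : ℝ → ℝ) (lam : ℂ) (x t : ℝ) : ℂ :=
  lam * ((x ^ α - t ^ α : ℝ) : ℂ) / (α : ℂ) - ((Qfun α p x : ℝ) : ℂ) + ((Qfun α p t : ℝ) : ℂ)

section Phase

variable {α b x : ℝ} {p : ℝ → ℝ} {lam : ℂ}

theorem phase_self : phase α p lam x x = 0 := by
  simp [phase]

theorem phase_zero (hα : α ≠ 0) :
    phase α p lam x 0 = lam * ((x ^ α : ℝ) : ℂ) / (α : ℂ) - ((Qfun α p x : ℝ) : ℂ) := by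
  simp [phase, Qfun, Real.zero_rpow hα]

theorem continuousOn_phase (hα : 0 < α) (hb : 0 ≤ b) (hp : ContinuousOn p (Icc 0 b)) :
    ContinuousOn (phase α p lam x) (Icc 0 b) := by
  have hpow : ContinuousOn (fun t : ℝ ↦ t ^ α) (Icc 0 b) := fun t _ ↦
    (Real.continuousAt_rpow_const t α (Or.inr hα.le)).continuousWithinAt
  exact ((((continuousOn_const.mul (Complex.continuous_ofReal.comp_continuousOn
    (continuousOn_const.sub hpow))).div_const _).sub continuousOn_const).add
    (Complex.continuous_ofReal.comp_continuousOn (continuousOn_Qfun hα hb hp)))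

theorem hasDerivAt_phase (hα : 0 < α) (hp : ContinuousOn p (Icc 0 b)) {t : ℝ}
    (ht : t ∈ Ioo 0 b) :
    HasDerivAt (phase α p lam x) (((t ^ (α - 1) : ℝ) : ℂ) * -(lam - p t)) t := by
  have hpow := ((Real.hasDerivAt_rpow_const (p := α) (Or.inl ht.1.ne')).const_sub
    (x ^ α)).ofReal_comp
  have h := (((hpow.const_mul lam).div_const (α : ℂ)).sub_const ((Qfun α p x : ℝ) : ℂ)).add
    (hasDerivAt_Qfun hα hp ht).ofReal_comp
  refine h.congr_deriv ?_
  have : (α : ℂ) ≠ 0 := Complex.ofReal_ne_zero.2 hα.ne'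
  push_cast
  field_simp
  ring

end Phase

def variationOfConstantsFn (α h : ℝ) (p : ℝ → ℝ) (lam : ℂ) (y : ℝ → ℂ) (x t : ℝ) : ℂ :=
  Complex.sin (phase α p lam x t) * (lam - p t)⁻¹ * Function.update (cfDeriv α y) 0 (h : ℂ) t
    + Complex.cos (phase α p lam x t) * y t

def variationOfConstantsDeriv (α h : ℝ) (p q : ℝ → ℝ) (lam : ℂ) (y : ℝ → ℂ) (x t : ℝ) : ℂ :=
  ((t ^ (α - 1) : ℝ) : ℂ) *
      (Complex.sin (phase α p lam x t) * (lam - p t)⁻¹ * ((q t + p t ^ 2) * y t))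
    + deriv p t * (Complex.sin (phase α p lam x t) * ((lam - p t)⁻¹) ^ 2
      * Function.update (cfDeriv α y) 0 (h : ℂ) t)

section VariationOfConstants

variable {α h x : ℝ} {p q : ℝ → ℝ} {lam : ℂ} {y : ℝ → ℂ}

theorem variationOfConstantsFn_self : variationOfConstantsFn α h p lam y x x = y x := by
  simp [variationOfConstantsFn, phase_self]

theorem variationOfConstantsFn_zero (hα : α ≠ 0) (hy : y 0 = 1) :
    variationOfConstantsFn α h p lam y x 0 =
      Complex.sin (lam * ((x ^ α : ℝ) : ℂ) / (α : ℂ) - ((Qfun α p x : ℝ) : ℂ))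
          * (lam - p 0)⁻¹ * h
        + Complex.cos (lam * ((x ^ α : ℝ) : ℂ) / (α : ℂ) - ((Qfun α p x : ℝ) : ℂ)) := by
  simp [variationOfConstantsFn, phase_zero hα, hy]

theorem variationOfConstantsDeriv_eq_of_pos {t : ℝ} (ht : 0 < t) :
    variationOfConstantsDeriv α h p q lam y x t =
      ((t ^ (α - 1) : ℝ) : ℂ) *
        (Complex.sin (lam * ((x ^ α - t ^ α : ℝ) : ℂ) / (α : ℂ)
              - ((Qfun α p x : ℝ) : ℂ) + ((Qfun α p t : ℝ) : ℂ)) / (lam - (p t : ℂ))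
          * (((q t + p t ^ 2 : ℝ) : ℂ) * y t
              + ((cfDerivR α p t : ℝ) : ℂ) / (lam - (p t : ℂ)) * cfDeriv α y t)) := by
  have hτ := congrArg (fun r : ℝ ↦ (r : ℂ)) (Real.rpow_sub_one_mul_rpow_one_sub ht α)
  simp only [variationOfConstantsDeriv, phase, cfDerivR, Function.update_of_ne ht.ne']
  generalize Complex.sin _ = S
  push_cast at hτ ⊢
  linear_combination -(S * ((lam - p t)⁻¹) ^ 2 * cfDeriv α y t * ((deriv p t : ℝ) : ℂ)) * hτ

theorem IsPhi.absolutelyContinuousOnInterval_variationOfConstantsFn (hα : 0 < α)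
    (hp : AbsolutelyContinuousOnInterval p 0 Real.pi) (hq : ContinuousOn q (Icc 0 Real.pi))
    (hlam : ∀ t ∈ Icc 0 Real.pi, lam - p t ≠ 0) (hy : IsPhi α h p q lam y)
    (hx : x ∈ Icc 0 Real.pi) :
    AbsolutelyContinuousOnInterval (variationOfConstantsFn α h p lam y x) 0 x := by
  have hpc : ContinuousOn p (Icc 0 Real.pi) := by
    simpa [uIcc_of_le Real.pi_pos.le] using hp.continuousOn
  have hIcc : Icc 0 x ⊆ Icc 0 Real.pi := Icc_subset_Icc_right hx.2
  have hIoo : Ioo 0 x ⊆ Ioo 0 Real.pi := Ioo_subset_Ioo_right hx.2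
  have hθ := continuousOn_phase (lam := lam) (x := x) hα Real.pi_pos.le hpc
  have hψ := hy.continuousOn_update_cfDeriv
  have hcp : ContinuousOn (fun t ↦ (p t : ℂ)) (Icc 0 Real.pi) :=
    Complex.continuous_ofReal.comp_continuousOn hpc
  have hcq : ContinuousOn (fun t ↦ (q t : ℂ)) (Icc 0 Real.pi) :=
    Complex.continuous_ofReal.comp_continuousOn hq
  have hsin : AbsolutelyContinuousOnInterval (fun t ↦ Complex.sin (phase α p lam x t)) 0 x :=
    absolutelyContinuousOnInterval_of_hasDerivAt_rpow_mul
      (m := fun t ↦ Complex.cos (phase α p lam x t) * -(lam - p t)) hα hx.1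
      ((Complex.continuous_sin.comp_continuousOn hθ).mono hIcc)
      (((Complex.continuous_cos.comp_continuousOn hθ).mul
        (continuousOn_const.sub hcp).neg).mono hIcc)
      fun t ht ↦ ((Complex.hasDerivAt_sin _).comp t
        (hasDerivAt_phase hα hpc (hIoo ht))).congr_deriv (by ring)
  have hcos : AbsolutelyContinuousOnInterval (fun t ↦ Complex.cos (phase α p lam x t)) 0 x :=
    absolutelyContinuousOnInterval_of_hasDerivAt_rpow_mul
      (m := fun t ↦ Complex.sin (phase α p lam x t) * (lam - p t)) hα hx.1
      ((Complex.continuous_cos.comp_continuousOn hθ).mono hIcc)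
      (((Complex.continuous_sin.comp_continuousOn hθ).mul (continuousOn_const.sub hcp)).mono hIcc)
      fun t ht ↦ ((Complex.hasDerivAt_cos _).comp t
        (hasDerivAt_phase hα hpc (hIoo ht))).congr_deriv (by ring)
  have hinv : AbsolutelyContinuousOnInterval (fun t ↦ (lam - p t)⁻¹) 0 x := by
    refine .inv ?_ fun t ht ↦ hlam t (hIcc (by rwa [uIcc_of_le hx.1] at ht))
    exact ((hp.mono (uIcc_subset_uIcc left_mem_uIcc (by rwa [uIcc_of_le Real.pi_pos.le]))).ofReal
      (𝕜 := ℂ)).of_dist_le (K := 1) fun s _ t _ ↦ by rw [dist_sub_left, one_mul]; exact le_rfl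
  have hdy : AbsolutelyContinuousOnInterval (Function.update (cfDeriv α y) 0 (h : ℂ)) 0 x :=
    absolutelyContinuousOnInterval_of_hasDerivAt_rpow_mul hα hx.1 (hψ.mono hIcc)
      (((((continuousOn_const.mul hcp).add hcq).sub continuousOn_const).mul
        hy.1.1).mono hIcc)
      fun t ht ↦ hy.hasDerivAt_update_cfDeriv (hIoo ht)
  have hy' : AbsolutelyContinuousOnInterval y 0 x :=
    absolutelyContinuousOnInterval_of_hasDerivAt_rpow_mul hα hx.1 (hy.1.1.mono hIcc)
      (hψ.mono hIcc) fun t ht ↦ hy.hasDerivAt (hIoo ht)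
  exact ((hsin.fun_smul hinv).fun_smul hdy).add (hcos.fun_smul hy')

theorem IsPhi.ae_hasDerivAt_variationOfConstantsFn (hα : 0 < α)
    (hp : AbsolutelyContinuousOnInterval p 0 Real.pi) (hlam : ∀ t ∈ Icc 0 Real.pi, lam - p t ≠ 0)
    (hy : IsPhi α h p q lam y) (hx : x ∈ Icc 0 Real.pi) :
    ∀ᵐ t, t ∈ uIcc 0 x → HasDerivAt (variationOfConstantsFn α h p lam y x)
      (variationOfConstantsDeriv α h p q lam y x t) t := by
  have hpc : ContinuousOn p (Icc 0 Real.pi) := by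
    simpa [uIcc_of_le Real.pi_pos.le] using hp.continuousOn
  filter_upwards [hp.ae_differentiableAt, Measure.ae_ne volume 0, Measure.ae_ne volume x]
    with t hpt ht0 htx ht
  rw [uIcc_of_le hx.1] at ht
  have htπ : t ∈ Ioo 0 Real.pi :=
    ⟨ht.1.lt_of_ne' ht0, (ht.2.lt_of_ne htx).trans_le hx.2⟩
  exact hasDerivAt_sin_mul_inv_mul_add_cos_mul (hasDerivAt_phase hα hpc htπ) (hy.hasDerivAt htπ)
    (hy.hasDerivAt_update_cfDeriv htπ)
    (hpt (by rw [uIcc_of_le Real.pi_pos.le]; exact Ioo_subset_Icc_self htπ)).hasDerivAt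
    (hlam t (Ioo_subset_Icc_self htπ))

theorem IsPhi.intervalIntegrable_variationOfConstantsDeriv (hα : 0 < α)
    (hp : AbsolutelyContinuousOnInterval p 0 Real.pi) (hq : ContinuousOn q (Icc 0 Real.pi))
    (hlam : ∀ t ∈ Icc 0 Real.pi, lam - p t ≠ 0) (hy : IsPhi α h p q lam y)
    (hx : x ∈ Icc 0 Real.pi) :
    IntervalIntegrable (variationOfConstantsDeriv α h p q lam y x) volume 0 x := by
  have hpc : ContinuousOn p (Icc 0 Real.pi) := by
    simpa [uIcc_of_le Real.pi_pos.le] using hp.continuousOn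
  have hIcc : uIcc 0 x ⊆ Icc 0 Real.pi := by
    rw [uIcc_of_le hx.1]; exact Icc_subset_Icc_right hx.2
  have hθ := continuousOn_phase (lam := lam) (x := x) hα Real.pi_pos.le hpc
  have hcp : ContinuousOn (fun t ↦ (p t : ℂ)) (Icc 0 Real.pi) :=
    Complex.continuous_ofReal.comp_continuousOn hpc
  have hcq : ContinuousOn (fun t ↦ (q t : ℂ)) (Icc 0 Real.pi) :=
    Complex.continuous_ofReal.comp_continuousOn hq
  have hu : ContinuousOn (fun t ↦ (lam - p t)⁻¹) (Icc 0 Real.pi) :=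
    (continuousOn_const.sub hcp).inv₀ hlam
  have hderiv := (hp.mono (uIcc_subset_uIcc left_mem_uIcc
    (by rw [uIcc_of_le Real.pi_pos.le]; exact ⟨hx.1, hx.2⟩))).intervalIntegrable_deriv
  refine (intervalIntegrable_rpow_sub_one_mul hα ?_).add
    ((show IntervalIntegrable (fun t ↦ ((deriv p t : ℝ) : ℂ)) volume 0 x from
      ⟨hderiv.1.ofReal, hderiv.2.ofReal⟩).mul_continuousOn ?_)
  · exact (((Complex.continuous_sin.comp_continuousOn hθ).mul hu).mul
      ((hcq.add (hcp.pow 2)).mul hy.1.1)).mono hIcc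
  · exact (((Complex.continuous_sin.comp_continuousOn hθ).mul (hu.pow 2)).mul
      hy.continuousOn_update_cfDeriv).mono hIcc

theorem IsPhi.integral_variationOfConstantsDeriv (hα : 0 < α)
    (hp : AbsolutelyContinuousOnInterval p 0 Real.pi) (hq : ContinuousOn q (Icc 0 Real.pi))
    (hlam : ∀ t ∈ Icc 0 Real.pi, lam - p t ≠ 0) (hy : IsPhi α h p q lam y)
    (hx : x ∈ Icc 0 Real.pi) :
    ∫ t in 0..x, variationOfConstantsDeriv α h p q lam y x t =
      variationOfConstantsFn α h p lam y x x - variationOfConstantsFn α h p lam y x 0 :=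
  (hy.absolutelyContinuousOnInterval_variationOfConstantsFn hα hp hq hlam
    hx).integral_eq_sub_of_ae_hasDerivAt
    (hy.intervalIntegrable_variationOfConstantsDeriv hα hp hq hlam hx)
    (hy.ae_hasDerivAt_variationOfConstantsFn hα hp hlam hx)

end VariationOfConstants

theorem phi_integral_equation_general (α : ℝ) (hα0 : 0 < α)
    (h : ℝ) (p q : ℝ → ℝ)
    (hp : MemW2 α p) (hq : MemW2 α q)
    (lam : ℂ) (hlam : ∀ x ∈ Set.Icc (0:ℝ) Real.pi, lam ≠ (p x : ℂ))
    (phi : ℝ → ℂ) (hphi : IsPhi α h p q lam phi) :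
    ∀ x ∈ Set.Icc (0:ℝ) Real.pi,
      phi x =
        Complex.cos (lam * ((x ^ α : ℝ) : ℂ) / (α : ℂ) - ((Qfun α p x : ℝ) : ℂ))
        + ((h : ℂ) / (lam - (p 0 : ℂ)))
            * Complex.sin (lam * ((x ^ α : ℝ) : ℂ) / (α : ℂ) - ((Qfun α p x : ℝ) : ℂ))
        + ∫ t in (0:ℝ)..x,
            ((t ^ (α - 1) : ℝ) : ℂ) *
              (Complex.sin (lam * ((x ^ α - t ^ α : ℝ) : ℂ) / (α : ℂ)
                    - ((Qfun α p x : ℝ) : ℂ) + ((Qfun α p t : ℝ) : ℂ))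
                  / (lam - (p t : ℂ))
                * (((q t + p t ^ 2 : ℝ) : ℂ) * phi t
                    + ((cfDerivR α p t : ℝ) : ℂ) / (lam - (p t : ℂ)) * cfDeriv α phi t)) := by
  intro x hx
  have hpAC := hp.1.absolutelyContinuousOnInterval Real.pi_pos.le
  have hqc : ContinuousOn q (Icc 0 Real.pi) := by
    simpa [uIcc_of_le Real.pi_pos.le] using
      (hq.1.absolutelyContinuousOnInterval Real.pi_pos.le).continuousOn
  have hB : ∀ t ∈ Icc 0 Real.pi, lam - (p t : ℂ) ≠ 0 := fun t ht ↦ sub_ne_zero.2 (hlam t ht)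
  have hFTC := hphi.integral_variationOfConstantsDeriv hα0 hpAC hqc hB hx
  rw [variationOfConstantsFn_self, variationOfConstantsFn_zero hα0.ne' hphi.2.1] at hFTC
  rw [integral_congr_ae (.of_forall fun t ht ↦
    (variationOfConstantsDeriv_eq_of_pos (by rw [uIoc_of_le hx.1] at ht; exact ht.1)).symm), hFTC]
  ring

/-- For `λ` with `λ ≠ p(x)` on `[0,π]` and `λ ≠ p(0)`, the solution
`φ(·,λ)` satisfies, for all `x ∈ [0,π]`, the integral equation
`φ(x,λ) = cos(λx^α/α - Q(x)) + (h/(λ-p(0))) sin(λx^α/α - Q(x))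
 + ∫₀ˣ [sin(λ(x^α-t^α)/α - Q(x)+Q(t))/(λ-p(t))]
        [(q+p²)(t) φ(t,λ) + (D^α p(t)/(λ-p(t))) D^α φ(t,λ)] d_α t`. -/
theorem phi_integral_equation (α : ℝ) (hα0 : 0 < α) (hα1 : α ≤ 1)
    (h : ℝ) (p q : ℝ → ℝ)
    (hp : MemW2 α p) (hp' : MemW2 α (cfDerivR α p)) (hq : MemW2 α q)
    (lam : ℂ) (hlam : ∀ x ∈ Set.Icc (0:ℝ) Real.pi, lam ≠ (p x : ℂ))
    (hlam0 : lam ≠ (p 0 : ℂ))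
    (phi : ℝ → ℂ) (hphi : IsPhi α h p q lam phi) :
    ∀ x ∈ Set.Icc (0:ℝ) Real.pi,
      phi x =
        Complex.cos (lam * ((x ^ α : ℝ) : ℂ) / (α : ℂ) - ((Qfun α p x : ℝ) : ℂ))
        + ((h : ℂ) / (lam - (p 0 : ℂ)))
            * Complex.sin (lam * ((x ^ α : ℝ) : ℂ) / (α : ℂ) - ((Qfun α p x : ℝ) : ℂ))
        + ∫ t in (0:ℝ)..x,
            ((t ^ (α - 1) : ℝ) : ℂ) *
              (Complex.sin (lam * ((x ^ α - t ^ α : ℝ) : ℂ) / (α : ℂ)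
                    - ((Qfun α p x : ℝ) : ℂ) + ((Qfun α p t : ℝ) : ℂ))
                  / (lam - (p t : ℂ))
                * (((q t + p t ^ 2 : ℝ) : ℂ) * phi t
                    + ((cfDerivR α p t : ℝ) : ℂ) / (lam - (p t : ℂ)) * cfDeriv α phi t)) :=
  phi_integral_equation_general α hα0 h p q hp hq lam hlam phi hphi

end
end

section
/- There exist constants C > 0 and r > 0 such that for all λ ∈ ℂ with |λ| ≥ r and all x ∈ [0,π], |φ(x,λ)| ≤ C exp(|τ| x^α/α) and |D^α φ(x,λ)| ≤ C |λ| exp(|τ| x^α/α), where λ = σ + iτ. -/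
open Set Filter Topology MeasureTheory intervalIntegral

noncomputable section

/-!
Substituting `t = x^α/α` turns `D^α` into `d/dt`, so `U(t) = φ(x)` and `V(t) = D^α φ(x)` solve
`U' = V`, `V' = (c - λ²) U` with `c = 2λp + q = O(|λ|)`. The combinations `V ± iλU` satisfy
`w' = ±iλ w + cU`; integrating against `exp(∓iλt)` and weighting by `exp(-|τ| t)` bounds
`(|V + iλU| + |V - iλU|) exp(-|τ| t)` by Grönwall, with initial value `O(|λ|)`, and this quantity
controls both `|λ| |U|` and `|V|`.
-/

theorem le_mul_exp_of_le_add_mul_integral {f : ℝ → ℝ} {T A K : ℝ}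
    (hf : ContinuousOn f (Icc 0 T)) (hK : 0 ≤ K)
    (hbound : ∀ t ∈ Icc 0 T, f t ≤ A + K * ∫ s in (0:ℝ)..t, f s) :
    ∀ t ∈ Icc 0 T, f t ≤ A * Real.exp (K * t) := by
  set G : ℝ → ℝ := fun t => A + K * ∫ s in (0:ℝ)..t, f s
  have hG : ContinuousOn G (Icc 0 T) := by
    rcases le_or_gt 0 T with hT | hT
    · refine continuousOn_const.add (continuousOn_const.mul ?_)
      simpa [uIcc_of_le hT] using continuousOn_primitive_interval'
        (hf.intervalIntegrable_of_Icc hT) (left_mem_uIcc (a := (0:ℝ)) (b := T))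
    · simp [Icc_eq_empty_of_lt hT]
  have hG' : ∀ t ∈ Ico 0 T, HasDerivWithinAt G (K * f t) (Ici t) t := by
    intro t ht
    have hmem : Icc 0 T ∈ 𝓝[>] t := Icc_mem_nhdsGT_of_mem ht
    have hint : IntervalIntegrable f volume 0 t :=
      (hf.mono (Icc_subset_Icc_right ht.2.le)).intervalIntegrable_of_Icc ht.1
    refine ((integral_hasDerivWithinAt_right hint
      ((hf.stronglyMeasurableAtFilter_nhdsWithin measurableSet_Icc t).filter_mono
        (nhdsWithin_le_of_mem hmem))
      ((hf t (Ico_subset_Icc_self ht)).mono_of_mem_nhdsWithin hmem)).const_mul K).const_add A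
  intro t ht
  calc f t ≤ G t := hbound t ht
    _ ≤ gronwallBound A K 0 (t - 0) :=
      le_gronwallBound_of_liminf_deriv_right_le hG
        (fun t ht _ hr => (hG' t ht).liminf_right_slope_le hr) (by simp [G])
        (fun t ht => by
          simpa using mul_le_mul_of_nonneg_left (hbound t (Ico_subset_Icc_self ht)) hK) t ht
    _ = A * Real.exp (K * t) := by rw [gronwallBound_ε0, sub_zero]

theorem norm_mul_exp_le_of_hasDerivAt_mul_add {μ : ℂ} {a T : ℝ} (hμ : μ.re ≤ a)
    {w f : ℝ → ℂ} (hw : ContinuousOn w (Icc 0 T)) (hf : ContinuousOn f (Icc 0 T))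
    (hw' : ∀ t ∈ Ioo 0 T, HasDerivAt w (μ * w t + f t) t) {t : ℝ} (ht : t ∈ Icc 0 T) :
    ‖w t‖ * Real.exp (-(a * t)) ≤ ‖w 0‖ + ∫ s in (0:ℝ)..t, ‖f s‖ * Real.exp (-(a * s)) := by
  set E : ℝ → ℂ := fun s => Complex.exp (-(μ * s))
  have hE : ∀ s, HasDerivAt E (E s * -μ) s := fun s => by
    simpa using ((hasDerivAt_id (s : ℂ)).const_mul (-μ)).comp_ofReal.cexp
  have hnormE : ∀ s : ℝ, ‖E s‖ = Real.exp (-(μ.re * s)) := fun s => by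
    simp [E, Complex.norm_exp]
  have hsub : Icc 0 t ⊆ Icc 0 T := Icc_subset_Icc_right ht.2
  have hcontE : ContinuousOn E (Icc 0 t) := fun s _ => (hE s).continuousAt.continuousWithinAt
  have hfE : IntervalIntegrable (fun s => f s * E s) volume 0 t :=
    ((hf.mono hsub).mul hcontE).intervalIntegrable_of_Icc ht.1
  have hvar : w t * E t = w 0 + ∫ s in (0:ℝ)..t, f s * E s := by
    rw [integral_eq_sub_of_hasDerivAt_of_le ht.1 ((hw.mono hsub).mul hcontE)
      (fun s hs => ((hw' s ⟨hs.1, hs.2.trans_le ht.2⟩).mul (hE s)).congr_deriv (by ring)) hfE]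
    simp [E]
  have hdecay : ∀ s ∈ Icc 0 t,
      ‖f s * E s‖ * Real.exp ((μ.re - a) * t) ≤ ‖f s‖ * Real.exp (-(a * s)) := by
    intro s hs
    rw [norm_mul, hnormE, mul_assoc, ← Real.exp_add]
    gcongr
    nlinarith [hs.2]
  calc ‖w t‖ * Real.exp (-(a * t)) = ‖w t * E t‖ * Real.exp ((μ.re - a) * t) := by
        rw [norm_mul, hnormE, mul_assoc, ← Real.exp_add]; ring_nf
    _ ≤ (‖w 0‖ + ∫ s in (0:ℝ)..t, ‖f s * E s‖) * Real.exp ((μ.re - a) * t) := by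
        rw [hvar]
        gcongr
        exact (norm_add_le _ _).trans (by gcongr; exact norm_integral_le_integral_norm ht.1)
    _ ≤ ‖w 0‖ + ∫ s in (0:ℝ)..t, ‖f s‖ * Real.exp (-(a * s)) := by
        rw [add_mul, ← intervalIntegral.integral_mul_const]
        gcongr
        · exact mul_le_of_le_one_right (norm_nonneg _)
            (Real.exp_le_one_iff.2 (by nlinarith [ht.1]))
        · exact integral_mono_on ht.1 (hfE.norm.mul_const _)
            (((hf.mono hsub).norm.mul (by fun_prop)).intervalIntegrable_of_Icc ht.1) hdecay

theorem perturbedOscillator_energy_le {lam : ℂ} {K T : ℝ} (hK : 0 ≤ K) {U V c : ℝ → ℂ}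
    (hU : ContinuousOn U (Icc 0 T)) (hV : ContinuousOn V (Icc 0 T))
    (hc : ContinuousOn c (Icc 0 T)) (hcK : ∀ t ∈ Icc 0 T, ‖c t‖ ≤ K * ‖lam‖)
    (hU' : ∀ t ∈ Ioo 0 T, HasDerivAt U (V t) t)
    (hV' : ∀ t ∈ Ioo 0 T, HasDerivAt V ((c t - lam ^ 2) * U t) t) {t : ℝ} (ht : t ∈ Icc 0 T) :
    ‖lam‖ * ‖U t‖ + ‖V t‖ ≤ 2 * (‖lam‖ * ‖U 0‖ + ‖V 0‖) * Real.exp ((K + |lam.im|) * t) := by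
  set wp : ℝ → ℂ := fun s => V s + Complex.I * lam * U s
  set wm : ℝ → ℂ := fun s => V s - Complex.I * lam * U s
  set a := |lam.im|
  set F : ℝ → ℝ := fun s => (‖wp s‖ + ‖wm s‖) * Real.exp (-(a * s))
  have hUw : ∀ s, 2 * (‖lam‖ * ‖U s‖) ≤ ‖wp s‖ + ‖wm s‖ := fun s => by
    have : wp s - wm s = 2 * Complex.I * lam * U s := by ring
    calc 2 * (‖lam‖ * ‖U s‖) = ‖wp s - wm s‖ := by simp [this]; ring
      _ ≤ ‖wp s‖ + ‖wm s‖ := norm_sub_le _ _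
  have hVw : ∀ s, 2 * ‖V s‖ ≤ ‖wp s‖ + ‖wm s‖ := fun s => by
    have : wp s + wm s = 2 * V s := by ring
    calc 2 * ‖V s‖ = ‖wp s + wm s‖ := by simp [this]
      _ ≤ ‖wp s‖ + ‖wm s‖ := norm_add_le _ _
  have hw0 : ‖wp 0‖ + ‖wm 0‖ ≤ 2 * (‖lam‖ * ‖U 0‖ + ‖V 0‖) := by
    have h1 := norm_add_le (V 0) (Complex.I * lam * U 0)
    have h2 := norm_sub_le (V 0) (Complex.I * lam * U 0)
    simp only [norm_mul, Complex.norm_I, one_mul] at h1 h2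
    linarith
  have hcU : ∀ s ∈ Icc 0 T, ‖c s * U s‖ ≤ K / 2 * (‖wp s‖ + ‖wm s‖) := fun s hs => by
    rw [norm_mul]
    calc ‖c s‖ * ‖U s‖ ≤ K * ‖lam‖ * ‖U s‖ := by gcongr; exact hcK s hs
      _ ≤ K / 2 * (‖wp s‖ + ‖wm s‖) := by nlinarith [hUw s]
  have hwp' : ∀ s ∈ Ioo 0 T, HasDerivAt wp (Complex.I * lam * wp s + c s * U s) s :=
    fun s hs => ((hV' s hs).add ((hU' s hs).const_mul _)).congr_deriv
      (by linear_combination (-lam ^ 2 * U s) * Complex.I_sq)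
  have hwm' : ∀ s ∈ Ioo 0 T, HasDerivAt wm (-(Complex.I * lam) * wm s + c s * U s) s :=
    fun s hs => ((hV' s hs).sub ((hU' s hs).const_mul _)).congr_deriv
      (by linear_combination (-lam ^ 2 * U s) * Complex.I_sq)
  have hwpc : ContinuousOn wp (Icc 0 T) := hV.add (continuousOn_const.mul hU)
  have hwmc : ContinuousOn wm (Icc 0 T) := hV.sub (continuousOn_const.mul hU)
  have hcUc : ContinuousOn (fun s => c s * U s) (Icc 0 T) := hc.mul hU
  have hFc : ContinuousOn F (Icc 0 T) :=
    (hwpc.norm.add hwmc.norm).mul (by fun_prop)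
  have hbound : ∀ s ∈ Icc 0 T, F s ≤ F 0 + K * ∫ r in (0:ℝ)..s, F r := by
    intro s hs
    have hp := norm_mul_exp_le_of_hasDerivAt_mul_add (a := a)
      (by simpa using neg_le_abs lam.im) hwpc hcUc hwp' hs
    have hm := norm_mul_exp_le_of_hasDerivAt_mul_add (a := a)
      (by simpa using le_abs_self lam.im) hwmc hcUc hwm' hs
    have hsub : Icc 0 s ⊆ Icc 0 T := Icc_subset_Icc_right hs.2
    have hint : ∫ r in (0:ℝ)..s, ‖c r * U r‖ * Real.exp (-(a * r))
        ≤ ∫ r in (0:ℝ)..s, K / 2 * F r :=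
      integral_mono_on hs.1
        (((hcUc.mono hsub).norm.mul (by fun_prop)).intervalIntegrable_of_Icc hs.1)
        (((hFc.mono hsub).const_smul (K / 2)).intervalIntegrable_of_Icc hs.1)
        (fun r hr => by
          simp only [F, ← mul_assoc]
          gcongr
          exact hcU r (hsub hr))
    rw [intervalIntegral.integral_const_mul] at hint
    have hF0 : F 0 = ‖wp 0‖ + ‖wm 0‖ := by simp [F]
    have hFs : F s = ‖wp s‖ * Real.exp (-(a * s)) + ‖wm s‖ * Real.exp (-(a * s)) := add_mul ..
    rw [hF0, hFs]
    linarith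
  have hF := le_mul_exp_of_le_add_mul_integral hFc hK hbound t ht
  calc ‖lam‖ * ‖U t‖ + ‖V t‖ ≤ ‖wp t‖ + ‖wm t‖ := by linarith [hUw t, hVw t]
    _ = F t * Real.exp (a * t) := by
        simp only [F, mul_assoc, ← Real.exp_add, neg_add_cancel, Real.exp_zero, mul_one]
    _ ≤ F 0 * Real.exp (K * t) * Real.exp (a * t) := by gcongr
    _ ≤ 2 * (‖lam‖ * ‖U 0‖ + ‖V 0‖) * Real.exp ((K + a) * t) := by
        rw [mul_assoc, ← Real.exp_add, add_mul]
        gcongr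
        simpa [F] using hw0

theorem hasDerivAt_rpow_inv_mul {α t : ℝ} (hα : 0 < α) (ht : 0 < t) :
    HasDerivAt (fun s : ℝ => (α * s) ^ α⁻¹) (((α * t) ^ α⁻¹) ^ (1 - α)) t := by
  have hαt : 0 < α * t := by positivity
  refine ((Real.hasDerivAt_rpow_const (p := α⁻¹) (Or.inl hαt.ne')).comp t
    ((hasDerivAt_id t).const_mul α)).congr_deriv ?_
  rw [← Real.rpow_mul hαt.le, show α⁻¹ * (1 - α) = α⁻¹ - 1 by field_simp]
  field_simp

theorem hasDerivAt_comp_rpow_inv_mul {α t : ℝ} {f : ℝ → ℂ} (hα : 0 < α) (ht : 0 < t)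
    (hf : DifferentiableAt ℝ f ((α * t) ^ α⁻¹)) :
    HasDerivAt (fun s => f ((α * s) ^ α⁻¹)) (cfDeriv α f ((α * t) ^ α⁻¹)) t := by
  have := hf.hasDerivAt.scomp t (hasDerivAt_rpow_inv_mul hα ht)
  rwa [Complex.real_smul] at this

theorem rpow_inv_mul_rpow_div {α x : ℝ} (hα : 0 < α) (hx : 0 ≤ x) :
    (α * (x ^ α / α)) ^ α⁻¹ = x := by
  rw [mul_div_cancel₀ _ hα.ne', Real.rpow_rpow_inv hx hα.ne']

theorem mapsTo_rpow_inv_mul_Icc {α b : ℝ} (hα : 0 < α) (hb : 0 ≤ b) :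
    MapsTo (fun s : ℝ => (α * s) ^ α⁻¹) (Icc 0 (b ^ α / α)) (Icc 0 b) := fun s hs =>
  ⟨by have := hs.1; positivity,
    (Real.rpow_inv_le_iff_of_pos (by have := hs.1; positivity) hb hα).2
      ((le_div_iff₀' hα).1 hs.2)⟩

theorem mapsTo_rpow_inv_mul_Ioo {α b : ℝ} (hα : 0 < α) (hb : 0 ≤ b) :
    MapsTo (fun s : ℝ => (α * s) ^ α⁻¹) (Ioo 0 (b ^ α / α)) (Ioo 0 b) := fun s hs =>
  ⟨by have := hs.1; positivity,
    (Real.rpow_inv_lt_iff_of_pos (by have := hs.1; positivity) hb hα).2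
      ((lt_div_iff₀' hα).1 hs.2)⟩

theorem norm_two_mul_add_le {lam : ℂ} (hlam : 1 ≤ ‖lam‖) {a b A B : ℝ} (ha : |a| ≤ A)
    (hb : |b| ≤ B) : ‖2 * lam * a + b‖ ≤ (2 * A + B) * ‖lam‖ :=
  calc ‖2 * lam * a + b‖ ≤ 2 * ‖lam‖ * |a| + |b| := by simpa using norm_add_le (2 * lam * a) b
    _ ≤ (2 * A + B) * ‖lam‖ := by nlinarith [norm_nonneg lam, abs_nonneg a, abs_nonneg b]

theorem AbsContOn.continuousOn {f : ℝ → ℝ} {a b : ℝ} (hf : AbsContOn f a b) :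
    ContinuousOn f (Icc a b) := by
  obtain ⟨g, hg, hfg⟩ := hf
  exact (continuousOn_const.add ((continuousOn_primitive_interval' hg left_mem_uIcc).mono
    Icc_subset_uIcc)).congr hfg

section Phi

variable {α h : ℝ} {p q : ℝ → ℝ} {lam : ℂ} {y : ℝ → ℂ}

theorem IsSolution.hasDerivAt_comp (hy : IsSolution α p q lam y) (hα : 0 < α) {t : ℝ}
    (ht : t ∈ Ioo 0 (Real.pi ^ α / α)) :
    HasDerivAt (fun s => y ((α * s) ^ α⁻¹)) (cfDeriv α y ((α * t) ^ α⁻¹)) t :=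
  hasDerivAt_comp_rpow_inv_mul hα ht.1
    (hy.2.1 _ (Ioo_subset_Ioc_self (mapsTo_rpow_inv_mul_Ioo hα Real.pi_pos.le ht)))

theorem IsSolution.hasDerivAt_cfDeriv_comp (hy : IsSolution α p q lam y) (hα : 0 < α) {t : ℝ}
    (ht : t ∈ Ioo 0 (Real.pi ^ α / α)) :
    HasDerivAt (fun s => cfDeriv α y ((α * s) ^ α⁻¹))
      ((2 * lam * p ((α * t) ^ α⁻¹) + q ((α * t) ^ α⁻¹) - lam ^ 2) * y ((α * t) ^ α⁻¹)) t := by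
  have hx := mapsTo_rpow_inv_mul_Ioo hα Real.pi_pos.le ht
  exact (hasDerivAt_comp_rpow_inv_mul hα ht.1 (hy.2.2.1 _ (Ioo_subset_Ioc_self hx))).congr_deriv
    (by linear_combination -(hy.2.2.2 _ hx))

/-- `D^α φ(0) = h` holds only as a limit, so `V` is redefined to be `h` at `t = 0`. -/
theorem IsPhi.continuousOn_update_cfDeriv_comp (hy : IsPhi α h p q lam y) (hα : 0 < α) :
    ContinuousOn (Function.update (fun s => cfDeriv α y ((α * s) ^ α⁻¹)) 0 (h : ℂ))
      (Icc 0 (Real.pi ^ α / α)) := by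
  have hX : Continuous fun s : ℝ => (α * s) ^ α⁻¹ :=
    (Real.continuous_rpow_const (inv_nonneg.2 hα.le)).comp (continuous_const_mul α)
  intro t ht
  rcases ht.1.eq_or_lt with rfl | ht0
  · rw [continuousWithinAt_update_same]
    refine hy.2.2.comp (tendsto_nhdsWithin_iff.2 ⟨?_, ?_⟩)
    · simpa [Real.zero_rpow (inv_ne_zero hα.ne')] using
        (hX.tendsto 0).mono_left nhdsWithin_le_nhds
    · filter_upwards [self_mem_nhdsWithin] with s hs
      have : 0 < s := lt_of_le_of_ne hs.1.1 (Ne.symm hs.2)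
      exact Real.rpow_pos_of_pos (by positivity) _
  · rw [continuousWithinAt_update_of_ne ht0.ne']
    have hx := mapsTo_rpow_inv_mul_Icc hα Real.pi_pos.le ht
    exact (ContinuousAt.comp (f := fun s : ℝ => (α * s) ^ α⁻¹)
      (hy.1.2.2.1 _ ⟨Real.rpow_pos_of_pos (by positivity) _, hx.2⟩).continuousAt
      hX.continuousAt).continuousWithinAt

/-- For `α < 1` the value `cfDeriv α y 0` is `0` since `0 ^ (1 - α) = 0`; for `α = 1` it is
`deriv y 0`, which is `h` or, if `y` is not differentiable at `0`, the junk value `0`. -/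
theorem IsPhi.norm_cfDeriv_zero_le (hy : IsPhi α h p q lam y) (hα : α ≤ 1) :
    ‖cfDeriv α y 0‖ ≤ |h| := by
  rcases hα.lt_or_eq with hα | rfl
  · simp [cfDeriv, Real.zero_rpow (sub_pos.2 hα).ne']
  by_cases hd : DifferentiableAt ℝ y 0
  · have hlim : Tendsto (deriv y) (𝓝[>] 0) (𝓝 (h : ℂ)) := by
      convert hy.2.2 using 1
      ext x
      simp [cfDeriv]
    have hright : HasDerivWithinAt y (h : ℂ) (Ici 0) 0 :=
      hasDerivWithinAt_Ici_of_tendsto_deriv (s := Ioc 0 Real.pi)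
        (fun x hx => (hy.1.2.1 x hx).differentiableWithinAt)
        ((hy.1.1 0 ⟨le_rfl, Real.pi_pos.le⟩).mono Ioc_subset_Icc_self)
        (Ioc_mem_nhdsGT Real.pi_pos) hlim
    simp [cfDeriv, (uniqueDiffWithinAt_Ici 0).eq_deriv _ hd.hasDerivAt.hasDerivWithinAt hright]
  · simp [cfDeriv, deriv_zero_of_not_differentiableAt hd]

theorem IsPhi.energy_le_of_pos (hy : IsPhi α h p q lam y) (hα : 0 < α)
    (hp : ContinuousOn p (Icc 0 Real.pi)) (hq : ContinuousOn q (Icc 0 Real.pi)) {K : ℝ}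
    (hK : 0 ≤ K) (hc : ∀ x ∈ Icc 0 Real.pi, ‖2 * lam * p x + q x‖ ≤ K * ‖lam‖) {x : ℝ}
    (hx : x ∈ Ioc 0 Real.pi) :
    ‖lam‖ * ‖y x‖ + ‖cfDeriv α y x‖ ≤
      2 * (‖lam‖ + |h|) * Real.exp ((K + |lam.im|) * (x ^ α / α)) := by
  have hX : MapsTo (fun s : ℝ => (α * s) ^ α⁻¹) (Icc 0 (Real.pi ^ α / α)) (Icc 0 Real.pi) :=
    mapsTo_rpow_inv_mul_Icc hα Real.pi_pos.le
  have hXc : ContinuousOn (fun s : ℝ => (α * s) ^ α⁻¹) (Icc 0 (Real.pi ^ α / α)) :=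
    ((Real.continuous_rpow_const (inv_nonneg.2 hα.le)).comp (continuous_const_mul α)).continuousOn
  have ht : x ^ α / α ∈ Icc 0 (Real.pi ^ α / α) := by
    have := hx.1.le
    exact ⟨by positivity, by gcongr; exact hx.2⟩
  have key := perturbedOscillator_energy_le hK (U := fun s => y ((α * s) ^ α⁻¹))
    (c := fun s => 2 * lam * p ((α * s) ^ α⁻¹) + q ((α * s) ^ α⁻¹))
    (hy.1.1.comp hXc hX) (hy.continuousOn_update_cfDeriv_comp hα)
    ((continuousOn_const.mul (Complex.continuous_ofReal.comp_continuousOn (hp.comp hXc hX))).add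
      (Complex.continuous_ofReal.comp_continuousOn (hq.comp hXc hX)))
    (fun s hs => hc _ (hX hs))
    (fun s hs => by simpa [Function.update_of_ne hs.1.ne'] using hy.1.hasDerivAt_comp hα hs)
    (fun s hs => (hy.1.hasDerivAt_cfDeriv_comp hα hs).congr_of_eventuallyEq
      (by filter_upwards [eventually_ne_nhds hs.1.ne'] with r hr
          using Function.update_of_ne hr _ _)) ht
  have hx0 : x ^ α / α ≠ 0 := by have := hx.1; positivity
  simpa [Function.update_of_ne hx0, rpow_inv_mul_rpow_div hα hx.1.le,
    Real.zero_rpow (inv_ne_zero hα.ne'), hy.2.1] using key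

theorem IsPhi.energy_le (hy : IsPhi α h p q lam y) (hα0 : 0 < α) (hα1 : α ≤ 1)
    (hp : ContinuousOn p (Icc 0 Real.pi)) (hq : ContinuousOn q (Icc 0 Real.pi)) {K : ℝ}
    (hK : 0 ≤ K) (hc : ∀ x ∈ Icc 0 Real.pi, ‖2 * lam * p x + q x‖ ≤ K * ‖lam‖)
    (hh : |h| ≤ ‖lam‖) {x : ℝ} (hx : x ∈ Icc 0 Real.pi) :
    ‖lam‖ * ‖y x‖ + ‖cfDeriv α y x‖ ≤
      ‖lam‖ * (4 * Real.exp (K * (Real.pi ^ α / α)) * Real.exp (|lam.im| * x ^ α / α)) := by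
  have hexp : 1 ≤ Real.exp (K * (Real.pi ^ α / α)) := Real.one_le_exp (by positivity)
  rcases hx.1.eq_or_lt with rfl | hx0
  · have := hy.norm_cfDeriv_zero_le hα1
    simp only [hy.2.1, norm_one, Real.zero_rpow hα0.ne', mul_zero, zero_div, Real.exp_zero]
    nlinarith [norm_nonneg lam]
  calc ‖lam‖ * ‖y x‖ + ‖cfDeriv α y x‖
      ≤ 2 * (‖lam‖ + |h|) * Real.exp ((K + |lam.im|) * (x ^ α / α)) :=
        hy.energy_le_of_pos hα0 hp hq hK hc ⟨hx0, hx.2⟩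
    _ = 2 * (‖lam‖ + |h|) * (Real.exp (K * (x ^ α / α)) * Real.exp (|lam.im| * (x ^ α / α))) := by
        rw [add_mul, Real.exp_add]
    _ ≤ 2 * (‖lam‖ + ‖lam‖) *
        (Real.exp (K * (Real.pi ^ α / α)) * Real.exp (|lam.im| * (x ^ α / α))) := by
        gcongr
        exact hx.2
    _ = _ := by rw [mul_div_assoc]; ring

end Phi

theorem phi_basic_estimates_general (α : ℝ) (hα0 : 0 < α) (hα1 : α ≤ 1)
    (h : ℝ) (p q : ℝ → ℝ)
    (hp : MemW2 α p) (hq : MemW2 α q)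
    (phi : ℂ → ℝ → ℂ) (hphi : ∀ lam : ℂ, IsPhi α h p q lam (phi lam)) :
    ∃ C > (0:ℝ), ∃ r > (0:ℝ), ∀ lam : ℂ, r ≤ ‖lam‖ →
      ∀ x ∈ Set.Icc (0:ℝ) Real.pi,
        ‖phi lam x‖ ≤ C * Real.exp (|lam.im| * x ^ α / α) ∧
        ‖cfDeriv α (phi lam) x‖
          ≤ C * ‖lam‖ * Real.exp (|lam.im| * x ^ α / α) := by
  obtain ⟨Np, hNp⟩ := isCompact_Icc.exists_bound_of_continuousOn hp.1.continuousOn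
  obtain ⟨Nq, hNq⟩ := isCompact_Icc.exists_bound_of_continuousOn hq.1.continuousOn
  set K := 2 * |Np| + |Nq|
  refine ⟨4 * Real.exp (K * (Real.pi ^ α / α)), by positivity, max 1 |h|, by positivity,
    fun lam hlam x hx => ?_⟩
  have hE := (hphi lam).energy_le (K := K) hα0 hα1 hp.1.continuousOn hq.1.continuousOn
    (by positivity) (fun x hx => norm_two_mul_add_le (le_of_max_le_left hlam)
      ((hNp x hx).trans (le_abs_self Np)) ((hNq x hx).trans (le_abs_self Nq)))
    (le_of_max_le_right hlam) hx
  have hlam0 : 0 < ‖lam‖ := one_pos.trans_le (le_of_max_le_left hlam)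
  constructor
  · nlinarith [norm_nonneg (cfDeriv α (phi lam) x)]
  · nlinarith [norm_nonneg (phi lam x)]

/-- There are `C > 0`, `r > 0` such that for all `λ = σ + iτ` with
`|λ| ≥ r` and all `x ∈ [0,π]`:
`|φ(x,λ)| ≤ C exp(|τ| x^α/α)` and `|D^α φ(x,λ)| ≤ C |λ| exp(|τ| x^α/α)`. -/
theorem phi_basic_estimates (α : ℝ) (hα0 : 0 < α) (hα1 : α ≤ 1)
    (h : ℝ) (p q : ℝ → ℝ)
    (hp : MemW2 α p) (hp' : MemW2 α (cfDerivR α p)) (hq : MemW2 α q)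
    (phi : ℂ → ℝ → ℂ) (hphi : ∀ lam : ℂ, IsPhi α h p q lam (phi lam)) :
    ∃ C > (0:ℝ), ∃ r > (0:ℝ), ∀ lam : ℂ, r ≤ ‖lam‖ →
      ∀ x ∈ Set.Icc (0:ℝ) Real.pi,
        ‖phi lam x‖ ≤ C * Real.exp (|lam.im| * x ^ α / α) ∧
        ‖cfDeriv α (phi lam) x‖
          ≤ C * ‖lam‖ * Real.exp (|lam.im| * x ^ α / α) :=
  phi_basic_estimates_general α hα0 hα1 h p q hp hq phi hphi

end
end
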